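/- arXiv:2410.16885 — 3 statements merged into one kernel-verified Lean document; each statement's English description precedes it below -/
import Mathlib

section
/- Let G be a group, H ≤ G, U a right H-module, π the projection along a left transversal Y with π(1) = 1, and β ∈ Z²(H,U). Let α ∈ Z²(G,W) be defined by α(g₁,g₂)(g) = β(π(g₁g₂g)π(g₂g)⁻¹, π(g₂g)π(g)⁻¹), where W is the coinduced module. Then the composite (restriction followed by evaluation at 1) recovers β: for all h₁,h₂ ∈ H, α(h₁,h₂)(1) = β(h₁,h₂). -/
theorem stmt_13 {G : Type*} [Group G] (H : Subgroup G) {U : Type*} [AddCommGroup U]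
    (act : U → H → U)
    (hact_add : ∀ u u' a, act (u + u') a = act u a + act u' a)
    (hact_one : ∀ u, act u 1 = u)
    (hact_mul : ∀ u a b, act (act u a) b = act u (a * b))
    (Y : Set G)
    (htrans : ∀ g : G, ∃! p : Y × H, (p.1 : G) * (p.2 : G) = g)
    (π : G → H)
    (hπ : ∀ (y : Y) (h : H), π ((y : G) * (h : G)) = h)
    (hπ1 : π 1 = 1)
    (β : H → H → U)
    (hβ1 : ∀ a : H, β 1 a = 0) (hβ2 : ∀ a : H, β a 1 = 0)
    (hβc : ∀ a b c : H, β b c - β (a * b) c + β a (b * c) - act (β a b) c = 0)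
    (α : G → G → G → U)
    (hα : ∀ g₁ g₂ g : G,
      α g₁ g₂ g = β (π (g₁ * g₂ * g) * (π (g₂ * g))⁻¹) (π (g₂ * g) * (π g)⁻¹)) :
    ∀ a b : H, α (a : G) (b : G) 1 = β a b := by
  have key : ∀ h : H, π (h : G) = h := by
    intro h
    obtain ⟨⟨y₀, h₀⟩, hy, _⟩ := htrans 1
    have h₀1 : h₀ = 1 := by
      have := hπ y₀ h₀
      rw [hy, hπ1] at this
      exact this.symm
    have hy1 : (y₀ : G) = 1 := by
      rw [h₀1] at hy; simpa using hy
    have := hπ y₀ h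
    rwa [hy1, one_mul] at this
  intro a b
  have hab : ((a : G) * (b : G)) = ((a * b : H) : G) := rfl
  rw [hα, mul_one, mul_one, hab, key, key, hπ1, mul_inv_cancel_right, inv_one, mul_one]
end

section
/- Let G be a finite group with a unique conjugacy class of involutions, H ≤ G of order 2 with nontrivial element h, W the coinduced module of the trivial 𝔽₂H-module U = {0,u}, and α ∈ Z²(G,W) the 2-cocycle defined from β (β(h,h) = u, else 0) via α(g₁,g₂)(g) = β(π(g₁g₂g)π(g₂g)⁻¹, π(g₂g)π(g)⁻¹) with π(1) = 1. Let E = G × W be the extension group with multiplication (g₁,f₁)(g₂,f₂) = (g₁g₂, f₁g₂ + f₂ + α(g₁,g₂)). Then every element of E of order 2 lies in the normal subgroup {(1,f) : f ∈ W}. -/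
/-!
An involution `g` of `G` is conjugate to `h`, say `g * d = d * h`. Evaluating the cocycle
condition `g • f + f + α(g, g) = 0` at `d`, the two `f`-terms cancel because `f` is constant on
the coset `d H = g d H`. What is left is `α(g, g)(d) = β(π(d) π(dh)⁻¹, π(dh) π(d)⁻¹)`, and since
`π(dh) = π(d) h` with `H = {1, h}` abelian, both arguments equal `h`, so it is `β(h, h) = 1 ≠ 0`.
-/

namespace Subgroup

variable {G : Type*} [Group G] {H : Subgroup G} {h : G}

theorem mul_self_eq_one_of_forall_mem_eq (hmem : h ∈ H) (hne : h ≠ 1)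
    (hord : ∀ x ∈ H, x = 1 ∨ x = h) : h * h = 1 :=
  (hord (h * h) (mul_mem hmem hmem)).resolve_right fun hhh =>
    hne (mul_eq_left.mp hhh)

theorem commute_of_forall_mem_eq (hmem : h ∈ H) (hord : ∀ x ∈ H, x = 1 ∨ x = h) (a b : H) :
    Commute a b := by
  have key : ∀ x : H, x = 1 ∨ x = ⟨h, hmem⟩ := fun x =>
    (hord x x.2).imp (fun e => Subtype.ext e) (fun e => Subtype.ext e)
  rcases key a with rfl | rfl
  · exact Commute.one_left b
  · rcases key b with rfl | rfl
    · exact Commute.one_right _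
    · exact Commute.refl _

end Subgroup

theorem transversal_proj_mul {G : Type*} [Group G] {H : Subgroup G} {Y : Set G} {π : G → H}
    (htrans : ∀ g : G, ∃ p : Y × H, (p.1 : G) * (p.2 : G) = g)
    (hπ : ∀ (y : Y) (h' : H), π ((y : G) * (h' : G)) = h') (d : G) (k : H) :
    π (d * k) = π d * k := by
  obtain ⟨⟨y, h'⟩, rfl⟩ := htrans d
  rw [hπ, mul_assoc, ← Subgroup.coe_mul, hπ]

open Classical in
theorem stmt_15_general {G : Type*} [Group G]
    (huniq : ∀ a b : G, a ^ 2 = 1 → a ≠ 1 → b ^ 2 = 1 → b ≠ 1 → IsConj a b)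
    (H : Subgroup G)
    (h : G) (hmem : h ∈ H) (hne : h ≠ 1) (hord : ∀ x ∈ H, x = 1 ∨ x = h)
    (Y : Set G)
    (htrans : ∀ g : G, ∃! p : Y × H, (p.1 : G) * (p.2 : G) = g)
    (π : G → H)
    (hπ : ∀ (y : Y) (h' : H), π ((y : G) * (h' : G)) = h')
    (β : H → H → ZMod 2)
    (hβ : ∀ a b : H, β a b = if (a : G) = h ∧ (b : G) = h then 1 else 0)
    (α : G → G → G → ZMod 2)
    (hα : ∀ g₁ g₂ g : G,
      α g₁ g₂ g = β (π (g₁ * g₂ * g) * (π (g₂ * g))⁻¹) (π (g₂ * g) * (π g)⁻¹)) :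
    ∀ x : G × (G → ZMod 2),
      (∀ g : G, ∀ h' ∈ H, x.2 (g * h') = x.2 g) →
      (x.1 * x.1, (fun g => x.2 (x.1 * g)) + x.2 + α x.1 x.1) =
        ((1 : G), (0 : G → ZMod 2)) →
      x ≠ (1, 0) →
      x.1 = 1 := by
  rintro ⟨g, f⟩ hf hinv -
  dsimp only at hf hinv ⊢
  obtain ⟨hgg, hcocycle⟩ := Prod.mk.inj hinv
  by_contra hg
  set k : H := ⟨h, hmem⟩
  have hkk : k * k = 1 := Subtype.ext (Subgroup.mul_self_eq_one_of_forall_mem_eq hmem hne hord)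
  obtain ⟨c, hd⟩ : IsConj h g :=
    huniq h g (by rw [sq]; exact congrArg Subtype.val hkk) hne (by rw [sq]; exact hgg) hg
  set d : G := ↑c
  change d * h = g * d at hd
  have hπd : π (g * d) = π d * k := by
    rw [← hd]; exact transversal_proj_mul (fun x => (htrans x).exists) hπ d k
  have hα1 : α g g d = 1 := by
    have hcomm := Subgroup.commute_of_forall_mem_eq hmem hord (π d) k
    rw [hα, hgg, one_mul, hπd, hβ, if_pos]
    constructor
    · rw [hcomm.eq, mul_inv_rev, mul_inv_cancel_left, inv_eq_of_mul_eq_one_left hkk]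
    · rw [hcomm.eq, mul_inv_cancel_right]
  have hcocycle_d := congrFun hcocycle d
  simp only [Pi.add_apply, Pi.zero_apply, ← hd, hf d h hmem, CharTwo.add_self_eq_zero, hα1,
    zero_add] at hcocycle_d
  exact one_ne_zero hcocycle_d

open Classical in
theorem stmt_15 {G : Type*} [Group G] [Fintype G]
    (huniq : ∀ a b : G, a ^ 2 = 1 → a ≠ 1 → b ^ 2 = 1 → b ≠ 1 → IsConj a b)
    (H : Subgroup G)
    (h : G) (hmem : h ∈ H) (hne : h ≠ 1) (hord : ∀ x ∈ H, x = 1 ∨ x = h)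
    (Y : Set G)
    (htrans : ∀ g : G, ∃! p : Y × H, (p.1 : G) * (p.2 : G) = g)
    (π : G → H)
    (hπ : ∀ (y : Y) (h' : H), π ((y : G) * (h' : G)) = h')
    (hπ1 : π 1 = 1)
    (β : H → H → ZMod 2)
    (hβ : ∀ a b : H, β a b = if (a : G) = h ∧ (b : G) = h then 1 else 0)
    (α : G → G → G → ZMod 2)
    (hα : ∀ g₁ g₂ g : G,
      α g₁ g₂ g = β (π (g₁ * g₂ * g) * (π (g₂ * g))⁻¹) (π (g₂ * g) * (π g)⁻¹)) :
    ∀ x : G × (G → ZMod 2),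
      (∀ g : G, ∀ h' ∈ H, x.2 (g * h') = x.2 g) →
      (x.1 * x.1, (fun g => x.2 (x.1 * g)) + x.2 + α x.1 x.1) =
        ((1 : G), (0 : G → ZMod 2)) →
      x ≠ (1, 0) →
      x.1 = 1 :=
  stmt_15_general huniq H h hmem hne hord Y htrans π hπ β hβ α hα
end

section
/- Let G be a finite group with a unique conjugacy class of involutions, H ≤ G of order 2, and E the extension of the coinduced module W (from the trivial 𝔽₂H-module of order 2) by G defined by the cocycle α as above. If (g,f) ∈ E satisfies g conjugate to h in G, then (g,f)² ≠ 1. -/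
/-!
Write `g = c h c⁻¹`, so that `g c = c h`. Evaluating the second coordinate of `(g, f)²` at `c`
gives `f (c h) + f c + α(g, g)(c)`; the first two terms cancel because `f` is constant on left
cosets of `H`. Since `π (c h) = π c · h` and `H = {1, h}` is abelian with `h² = 1`, both arguments
of `β` in `α(g, g)(c)` equal `h`, so that coordinate is `β(h, h) = 1 ≠ 0`.
-/

section OrderTwoSubgroup

variable {G : Type*} [Group G] {H : Subgroup G} {h : G}

theorem mul_self_eq_one_of_forall_mem_eq_one_or_eq (hmem : h ∈ H) (hne : h ≠ 1)
    (hord : ∀ x ∈ H, x = 1 ∨ x = h) : h * h = 1 :=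
  (hord (h * h) (H.mul_mem hmem hmem)).resolve_right fun hh =>
    hne (mul_eq_left.mp hh)

theorem mul_mul_inv_eq_of_forall_mem_eq_one_or_eq (hord : ∀ x ∈ H, x = 1 ∨ x = h)
    {k : G} (hk : k ∈ H) : k * h * k⁻¹ = h := by
  rcases hord k hk with rfl | rfl <;> group

end OrderTwoSubgroup

theorem proj_mul_of_transversal {G : Type*} [Group G] {H : Subgroup G} {Y : Set G}
    (htrans : ∀ g : G, ∃ p : Y × H, (p.1 : G) * (p.2 : G) = g) {π : G → H}
    (hπ : ∀ (y : Y) (h' : H), π ((y : G) * (h' : G)) = h') (c : G) (k : H) :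
    π (c * k) = π c * k := by
  obtain ⟨⟨y, k'⟩, rfl⟩ := htrans c
  rw [mul_assoc, ← Subgroup.coe_mul, hπ, hπ]

open Classical in
theorem cocycle_self_apply_eq_one {G : Type*} [Group G] {H : Subgroup G} {h : G}
    (hmem : h ∈ H) (hne : h ≠ 1) (hord : ∀ x ∈ H, x = 1 ∨ x = h) {π : G → H}
    (hπ : ∀ (c : G) (k : H), π (c * k) = π c * k) {β : H → H → ZMod 2}
    (hβ : ∀ a b : H, β a b = if (a : G) = h ∧ (b : G) = h then 1 else 0)
    {α : G → G → G → ZMod 2}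
    (hα : ∀ g₁ g₂ g : G,
      α g₁ g₂ g = β (π (g₁ * g₂ * g) * (π (g₂ * g))⁻¹) (π (g₂ * g) * (π g)⁻¹))
    {g c : G} (hgg : g * g = 1) (hgc : g * c = c * h) : α g g c = 1 := by
  have hh : h * h = 1 := mul_self_eq_one_of_forall_mem_eq_one_or_eq hmem hne hord
  have hconj : (π c : G) * h * (π c : G)⁻¹ = h :=
    mul_mul_inv_eq_of_forall_mem_eq_one_or_eq hord (π c).2
  have hπgc : π (g * c) = π c * ⟨h, hmem⟩ := hgc ▸ hπ c ⟨h, hmem⟩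
  rw [hα, hgg, one_mul, hπgc, hβ, if_pos]
  constructor
  · simpa [mul_inv_rev, ← mul_assoc, inv_eq_of_mul_eq_one_right hh] using hconj
  · simpa using hconj

open Classical in
theorem stmt_16_general {G : Type*} [Group G]
    (H : Subgroup G)
    (h : G) (hmem : h ∈ H) (hne : h ≠ 1) (hord : ∀ x ∈ H, x = 1 ∨ x = h)
    (Y : Set G)
    (htrans : ∀ g : G, ∃! p : Y × H, (p.1 : G) * (p.2 : G) = g)
    (π : G → H)
    (hπ : ∀ (y : Y) (h' : H), π ((y : G) * (h' : G)) = h')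
    (β : H → H → ZMod 2)
    (hβ : ∀ a b : H, β a b = if (a : G) = h ∧ (b : G) = h then 1 else 0)
    (α : G → G → G → ZMod 2)
    (hα : ∀ g₁ g₂ g : G,
      α g₁ g₂ g = β (π (g₁ * g₂ * g) * (π (g₂ * g))⁻¹) (π (g₂ * g) * (π g)⁻¹)) :
    ∀ (g : G) (f : G → ZMod 2), IsConj g h →
      (∀ g' : G, ∀ h' ∈ H, f (g' * h') = f g') →
      (g * g, (fun g' => f (g * g')) + f + α g g) ≠ ((1 : G), (0 : G → ZMod 2)) := by
  intro g f hconj hf heq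
  obtain ⟨c, rfl⟩ := isConj_iff.mp hconj.symm
  have hgc : c * h * c⁻¹ * c = c * h := by group
  have hα1 := cocycle_self_apply_eq_one hmem hne hord
    (proj_mul_of_transversal (fun g => (htrans g).exists) hπ) hβ hα (congrArg Prod.fst heq) hgc
  have hsnd := congrFun (congrArg Prod.snd heq) c
  simp only [Pi.add_apply, Pi.zero_apply, hgc, hf c h hmem, CharTwo.add_self_eq_zero, zero_add,
    hα1] at hsnd
  exact one_ne_zero hsnd

open Classical in
theorem stmt_16 {G : Type*} [Group G] [Fintype G]
    (huniq : ∀ a b : G, a ^ 2 = 1 → a ≠ 1 → b ^ 2 = 1 → b ≠ 1 → IsConj a b)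
    (H : Subgroup G)
    (h : G) (hmem : h ∈ H) (hne : h ≠ 1) (hord : ∀ x ∈ H, x = 1 ∨ x = h)
    (Y : Set G)
    (htrans : ∀ g : G, ∃! p : Y × H, (p.1 : G) * (p.2 : G) = g)
    (π : G → H)
    (hπ : ∀ (y : Y) (h' : H), π ((y : G) * (h' : G)) = h')
    (hπ1 : π 1 = 1)
    (β : H → H → ZMod 2)
    (hβ : ∀ a b : H, β a b = if (a : G) = h ∧ (b : G) = h then 1 else 0)
    (α : G → G → G → ZMod 2)
    (hα : ∀ g₁ g₂ g : G,
      α g₁ g₂ g = β (π (g₁ * g₂ * g) * (π (g₂ * g))⁻¹) (π (g₂ * g) * (π g)⁻¹)) :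
    ∀ (g : G) (f : G → ZMod 2), IsConj g h →
      (∀ g' : G, ∀ h' ∈ H, f (g' * h') = f g') →
      (g * g, (fun g' => f (g * g')) + f + α g g) ≠ ((1 : G), (0 : G → ZMod 2)) :=
  stmt_16_general H h hmem hne hord Y htrans π hπ β hβ α hα
end
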